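/- Let G be a group acting measurably on measurable spaces X and R. Let κ₀ be a Markov kernel from R to X satisfying κ₀(g • r) = (g • ·)_* κ₀(r) for all g, r, and let κ₁, …, κ_K be Markov kernels from X × R to X satisfying κ_k(g • x, g • r) = (g • ·)_* κ_k(x, r) for all g, x, r. Define the iterated conditional law p_k(r) recursively by p_0(r) = κ₀(r) and p_{k+1}(r) = (p_k(r)).bind (x ↦ κ_{k+1}(x, r)). Then for every k ≤ K, g ∈ G, and r ∈ R, p_k(g • r) = (g • ·)_* (p_k(r)). -/

import Mathlib

open MeasureTheory ProbabilityTheory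

lemma map_bind_aux {α β : Type*} [MeasurableSpace α] [MeasurableSpace β]
    (μ : Measure α) (κ : α → Measure α) (hκ : Measurable κ)
    (f : α → β) (hf : Measurable f) :
    ((μ.map f).bind fun b => μ) = ((μ.map f).bind fun b => μ) := rfl

lemma bind_map_eq {α β γ : Type*} [MeasurableSpace α] [MeasurableSpace β] [MeasurableSpace γ]
    (μ : Measure α) (f : α → β) (hf : Measurable f)
    (κ : β → Measure γ) (hκ : Measurable κ) :
    (μ.map f).bind κ = μ.bind (fun a => κ (f a)) := by
  ext s hs
  rw [Measure.bind_apply hs hκ.aemeasurable]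
  erw [Measure.bind_apply hs (hκ.comp hf).aemeasurable]
  erw [MeasureTheory.lintegral_map ((Measure.measurable_coe hs).comp hκ) hf]
  rfl

lemma map_bind_eq {α β γ : Type*} [MeasurableSpace α] [MeasurableSpace β] [MeasurableSpace γ]
    (μ : Measure α) (κ : α → Measure β) (hκ : Measurable κ)
    (f : β → γ) (hf : Measurable f) :
    μ.bind (fun a => (κ a).map f) = (μ.bind κ).map f := by
  ext s hs
  rw [Measure.map_apply hf hs, Measure.bind_apply (hf hs) hκ.aemeasurable]
  erw [Measure.bind_apply hs ((Measure.measurable_map f hf).comp hκ).aemeasurable]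
  refine lintegral_congr fun a => ?_
  exact Measure.map_apply hf hs

/-- Proposition 3 / Lemma A1 in kernel form: an equivariant prior kernel pushed
through equivariant transition kernels stays equivariant at every step. -/
theorem stmt_4 {G X R : Type*} [Group G] [MeasurableSpace G]
    [MeasurableSpace X] [MeasurableSpace R]
    [MulAction G X] [MulAction G R]
    (hmeasX : ∀ g : G, Measurable fun x : X => g • x)
    (hmeasR : ∀ g : G, Measurable fun r : R => g • r)
    (K : ℕ)
    (κ₀ : Kernel R X) [IsMarkovKernel κ₀]
    (κ : ℕ → Kernel (X × R) X) [∀ k, IsMarkovKernel (κ k)]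
    (hκ₀ : ∀ (g : G) (r : R), κ₀ (g • r) = (κ₀ r).map fun x => g • x)
    (hκ : ∀ (k : ℕ) (g : G) (x : X) (r : R),
      κ k (g • x, g • r) = (κ k (x, r)).map fun x' => g • x')
    (p : ℕ → R → Measure X)
    (hp0 : ∀ r, p 0 r = κ₀ r)
    (hprec : ∀ k < K, ∀ r, p (k + 1) r = (p k r).bind fun x => κ (k + 1) (x, r)) :
    ∀ k ≤ K, ∀ (g : G) (r : R), p k (g • r) = (p k r).map fun x => g • x := by
  intro k
  induction k with
  | zero =>
    intro _ g r
    rw [hp0, hp0, hκ₀]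
  | succ k ih =>
    intro hk g r
    have hkK : k < K := Nat.lt_of_succ_le hk
    have ihk := ih (le_of_lt hkK) g r
    have hκmeas : Measurable fun x : X => (κ (k + 1)) (x, r) :=
      (κ (k + 1)).measurable.comp (measurable_prodMk_right)
    have hκmeas' : Measurable fun x : X => (κ (k + 1)) (x, g • r) :=
      (κ (k + 1)).measurable.comp (measurable_prodMk_right)
    rw [hprec k hkK, hprec k hkK, ihk,
      bind_map_eq _ _ (hmeasX g) _ hκmeas']
    have : (fun x : X => (κ (k + 1)) (g • x, g • r))
        = fun x : X => ((κ (k + 1)) (x, r)).map fun x' => g • x' := by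
      funext x; exact hκ (k + 1) g x r
    rw [this, map_bind_eq _ _ hκmeas _ (hmeasX g)]
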